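/- For every real number x ≥ 1, the sequence of truncated cube-root nested radicals C m x converges to x + 1 as m → ∞; that is, x + 1 = ∛(1 + 3x + x²∛(1 + 3(x+2) + (x+2)²∛(...))). -/
import Mathlib


noncomputable def C : ℕ → ℝ → ℝ
  | 0, _ => 0
  | m + 1, y => (1 + 3 * y + y ^ 2 * C m (y + 2)) ^ (1 / 3 : ℝ)

lemma C_nonneg : ∀ m : ℕ, ∀ y : ℝ, 0 ≤ y → 0 ≤ C m y := by
  intro m
  induction m with
  | zero => intro y _; simp [C]
  | succ n ih =>
    intro y hy
    have h := ih (y + 2) (by linarith)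
    have hbase : 0 ≤ 1 + 3 * y + y ^ 2 * C n (y + 2) := by positivity
    exact Real.rpow_nonneg hbase _

lemma C_cube (m : ℕ) (y : ℝ) (hy : 0 ≤ y) :
    (C (m + 1) y) ^ 3 = 1 + 3 * y + y ^ 2 * C m (y + 2) := by
  have h := C_nonneg m (y + 2) (by linarith)
  have hbase : 0 ≤ 1 + 3 * y + y ^ 2 * C m (y + 2) := by positivity
  show ((1 + 3 * y + y ^ 2 * C m (y + 2)) ^ (1 / 3 : ℝ)) ^ 3 = _
  rw [← Real.rpow_natCast ((1 + 3 * y + y ^ 2 * C m (y + 2)) ^ (1 / 3 : ℝ)) 3,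
    ← Real.rpow_mul hbase]
  norm_num

lemma C_le : ∀ m : ℕ, ∀ y : ℝ, 1 ≤ y → C m y ≤ y + 1 := by
  intro m
  induction m with
  | zero => intro y hy; simp [C]; linarith
  | succ n ih =>
    intro y hy
    have hy0 : (0:ℝ) ≤ y := by linarith
    have hc0 : 0 ≤ C n (y + 2) := C_nonneg n (y + 2) (by linarith)
    have hc1 : C n (y + 2) ≤ (y + 2) + 1 := ih (y + 2) (by linarith)
    have hb0 : 0 ≤ C (n + 1) y := C_nonneg (n + 1) y hy0
    have hcube := C_cube n y hy0
    nlinarith [sq_nonneg (C (n + 1) y - (y + 1)), sq_nonneg (C (n + 1) y + (y + 1))]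

lemma one_le_C (m : ℕ) (y : ℝ) (hy : 1 ≤ y) : 1 ≤ C (m + 1) y := by
  have hy0 : (0:ℝ) ≤ y := by linarith
  have hc0 : 0 ≤ C m (y + 2) := C_nonneg m (y + 2) (by linarith)
  have hb0 : 0 ≤ C (m + 1) y := C_nonneg (m + 1) y hy0
  have hcube := C_cube m y hy0
  nlinarith [sq_nonneg (C (m + 1) y - 1), sq_nonneg (C (m + 1) y + 1)]

lemma key : ∀ m : ℕ, ∀ y : ℝ, 1 ≤ y →
    ((y + 1) - C m y) ^ 2 * (y + 2 * m) ^ 3 ≤ y ^ 3 * (y + 2 * m + 1) ^ 2 := by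
  intro m
  induction m with
  | zero =>
    intro y hy
    simp [C]
    ring_nf
    exact le_rfl
  | succ n ih =>
    intro y hy
    have hy0 : (0:ℝ) ≤ y := by linarith
    set b := C (n + 1) y with hbdef
    set c := C n (y + 2) with hcdef
    have hc0 : 0 ≤ c := C_nonneg n (y + 2) (by linarith)
    have hc1 : c ≤ (y + 2) + 1 := C_le n (y + 2) (by linarith)
    have hb1 : 1 ≤ b := one_le_C n y hy
    have hb2 : b ≤ y + 1 := C_le (n + 1) y hy
    have hcube : b ^ 3 = 1 + 3 * y + y ^ 2 * c := C_cube n y hy0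
    set t : ℝ := y + 2 * n + 2 with htdef
    have IH : ((y + 3) - c) ^ 2 * t ^ 3 ≤ (y + 2) ^ 3 * (t + 1) ^ 2 := by
      have := ih (y + 2) (by linarith)
      have e1 : (y + 2) + 2 * (n:ℝ) = t := by rw [htdef]; ring
      have e2 : (y + 2) + 2 * (n:ℝ) + 1 = t + 1 := by rw [htdef]; ring
      calc ((y + 3) - c) ^ 2 * t ^ 3 = ((y + 2) + 1 - c) ^ 2 * ((y + 2) + 2 * (n:ℝ)) ^ 3 := by
            rw [e1]; ring_nf
        _ ≤ (y + 2) ^ 3 * ((y + 2) + 2 * (n:ℝ) + 1) ^ 2 := this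
        _ = (y + 2) ^ 3 * (t + 1) ^ 2 := by rw [e2]
    have hid : ((y + 1) - b) * ((y + 1) ^ 2 + (y + 1) * b + b ^ 2) = y ^ 2 * ((y + 3) - c) := by
      linear_combination -hcube
    have hab : 0 ≤ (y + 1) - b := by linarith
    have h1 : ((y + 1) - b) * ((y + 1) * (y + 2)) ≤ y ^ 2 * ((y + 3) - c) := by
      have hden : (y + 1) * (y + 2) ≤ (y + 1) ^ 2 + (y + 1) * b + b ^ 2 := by nlinarith
      calc ((y + 1) - b) * ((y + 1) * (y + 2))
          ≤ ((y + 1) - b) * ((y + 1) ^ 2 + (y + 1) * b + b ^ 2) :=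
            mul_le_mul_of_nonneg_left hden hab
        _ = y ^ 2 * ((y + 3) - c) := hid
    have h2 : (((y + 1) - b) * ((y + 1) * (y + 2))) ^ 2 ≤ (y ^ 2 * ((y + 3) - c)) ^ 2 :=
      pow_le_pow_left₀ (mul_nonneg hab (by positivity)) h1 2
    have hQ : (0:ℝ) < ((y + 1) * (y + 2)) ^ 2 := by positivity
    have hgoal : ((y + 1) - b) ^ 2 * t ^ 3 ≤ y ^ 3 * (t + 1) ^ 2 := by
      have ht0 : (0:ℝ) ≤ t ^ 3 := by positivity
      have chain : ((y + 1) - b) ^ 2 * t ^ 3 * ((y + 1) * (y + 2)) ^ 2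
          ≤ y ^ 3 * (t + 1) ^ 2 * ((y + 1) * (y + 2)) ^ 2 := by
        calc ((y + 1) - b) ^ 2 * t ^ 3 * ((y + 1) * (y + 2)) ^ 2
            = (((y + 1) - b) * ((y + 1) * (y + 2))) ^ 2 * t ^ 3 := by ring
          _ ≤ (y ^ 2 * ((y + 3) - c)) ^ 2 * t ^ 3 := mul_le_mul_of_nonneg_right h2 ht0
          _ = y ^ 4 * (((y + 3) - c) ^ 2 * t ^ 3) := by ring
          _ ≤ y ^ 4 * ((y + 2) ^ 3 * (t + 1) ^ 2) :=
              mul_le_mul_of_nonneg_left IH (by positivity)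
          _ ≤ y ^ 3 * (t + 1) ^ 2 * ((y + 1) * (y + 2)) ^ 2 := by
              nlinarith [mul_nonneg (mul_nonneg (pow_nonneg hy0 3) (sq_nonneg (y + 2)))
                (sq_nonneg (t + 1))]
      exact le_of_mul_le_mul_right chain hQ
    have e1 : y + 2 * ((n:ℝ) + 1) = t := by rw [htdef]; ring
    push_cast
    rw [e1]
    calc ((y + 1) - b) ^ 2 * t ^ 3 ≤ y ^ 3 * (t + 1) ^ 2 := hgoal

theorem nested_cbrt_radical_eq (x : ℝ) (hx : 1 ≤ x) :
    Filter.Tendsto (fun m => C m x) Filter.atTop (nhds (x + 1)) := by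
  have hx0 : (0:ℝ) ≤ x := by linarith
  have hE0 : ∀ m : ℕ, 0 ≤ x + 1 - C m x := fun m => by
    have := C_le m x hx; linarith
  have hbound : ∀ m : ℕ, 1 ≤ m → x + 1 - C m x ≤ Real.sqrt (2 * x ^ 3 / m) := by
    intro m hm
    set E : ℝ := x + 1 - C m x with hEdef
    have hE : 0 ≤ E := hE0 m
    have hk := key m x hx
    set s : ℝ := x + 2 * m with hsdef
    have hm1 : (1:ℝ) ≤ (m:ℝ) := by exact_mod_cast hm
    have hs3 : (3:ℝ) ≤ s := by rw [hsdef]; linarith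
    have h2s : (s + 1) ^ 2 ≤ 2 * s ^ 2 := by nlinarith
    have h3 : E ^ 2 * s ^ 3 ≤ 2 * x ^ 3 * s ^ 2 := by
      calc E ^ 2 * s ^ 3 ≤ x ^ 3 * (s + 1) ^ 2 := hk
        _ ≤ x ^ 3 * (2 * s ^ 2) := mul_le_mul_of_nonneg_left h2s (by positivity)
        _ = 2 * x ^ 3 * s ^ 2 := by ring
    have h4 : E ^ 2 * s ≤ 2 * x ^ 3 := by
      have hs2 : (0:ℝ) < s ^ 2 := by positivity
      have : E ^ 2 * s * s ^ 2 ≤ 2 * x ^ 3 * s ^ 2 := by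
        calc E ^ 2 * s * s ^ 2 = E ^ 2 * s ^ 3 := by ring
          _ ≤ 2 * x ^ 3 * s ^ 2 := h3
      exact le_of_mul_le_mul_right this hs2
    have h5 : E ^ 2 * m ≤ 2 * x ^ 3 := by
      have hms : (m:ℝ) ≤ s := by rw [hsdef]; linarith
      calc E ^ 2 * (m:ℝ) ≤ E ^ 2 * s := mul_le_mul_of_nonneg_left hms (sq_nonneg E)
        _ ≤ 2 * x ^ 3 := h4
    have hmpos : (0:ℝ) < (m:ℝ) := by linarith
    have h6 : E ^ 2 ≤ 2 * x ^ 3 / m := by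
      rw [le_div_iff₀ hmpos]; exact h5
    calc E = Real.sqrt (E ^ 2) := (Real.sqrt_sq hE).symm
      _ ≤ Real.sqrt (2 * x ^ 3 / m) := Real.sqrt_le_sqrt h6
  have hlim : Filter.Tendsto (fun m : ℕ => Real.sqrt (2 * x ^ 3 / m)) Filter.atTop (nhds 0) := by
    have h := tendsto_const_div_atTop_nhds_zero_nat (2 * x ^ 3)
    have := h.sqrt
    simpa using this
  have hEtend : Filter.Tendsto (fun m : ℕ => x + 1 - C m x) Filter.atTop (nhds 0) := by
    apply tendsto_of_tendsto_of_tendsto_of_le_of_le' tendsto_const_nhds hlim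
    · exact Filter.Eventually.of_forall hE0
    · filter_upwards [Filter.eventually_ge_atTop 1] with m hm
      exact hbound m hm
  have := (tendsto_const_nhds (x := x + 1) (f := Filter.atTop (α := ℕ))).sub hEtend
  simpa using this
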